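/- Let R be a domain, r a finitary ideal system on R, n ∈ ℕ₀, and I₁, …, I_n nonzero r-ideals of R that are pairwise r-coprime. Then (I₁ ⋯ I_n)_r = I₁ ∩ ⋯ ∩ I_n. -/

import Mathlib

open Pointwise

/-- An ideal system `r` on an integral domain `R`, with the standing convention that
every `r`-ideal is an ordinary ring ideal (`I_r(R) ⊆ I(R)`). The map `cl` is the
closure `X ↦ X_r`. -/
structure IdealSystem (R : Type*) [CommRing R] [IsDomain R] where
  cl : Set R → Set R
  subset_cl : ∀ X : Set R, X ⊆ cl X
  cl_mono : ∀ X Y : Set R, X ⊆ cl Y → cl X ⊆ cl Y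
  principal_subset : ∀ c : R, {x : R | ∃ y : R, x = c * y} ⊆ cl {c}
  smul_cl : ∀ (c : R) (X : Set R), c • cl X = cl (c • X)
  zero_mem : ∀ X : Set R, (0 : R) ∈ cl X
  add_mem : ∀ X : Set R, ∀ a ∈ cl X, ∀ b ∈ cl X, a + b ∈ cl X
  mul_mem : ∀ (X : Set R) (r : R), ∀ a ∈ cl X, r * a ∈ cl X

variable {R : Type*} [CommRing R] [IsDomain R]

/-- `I` is a nonzero `r`-ideal, i.e. an element of the semigroup `I_r(R)`. -/
def IdealSystem.IsRIdeal (rs : IdealSystem R) (I : Set R) : Prop :=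
  rs.cl I = I ∧ I ≠ {0}

/-- Two `r`-ideals are `r`-coprime if `R` is the only `r`-ideal containing both. -/
def IdealSystem.RCoprime (rs : IdealSystem R) (I J : Set R) : Prop :=
  ∀ C : Set R, rs.cl C = C → I ⊆ C → J ⊆ C → C = Set.univ

/-!
Write `A` for an `r`-ideal and call a set `B` coprime to `A` when `1 ∈ (A ∪ B)_r`. Since
`X_r Y ⊆ (XY)_r`, we get `1 ∈ (A ∪ B)_r (A ∪ C)_r ⊆ ((A ∪ B)(A ∪ C))_r ⊆ (A ∪ BC)_r`, so
coprimality to `A` is preserved by products. If `B` is coprime to `A`, then `(AB)_r = A ∩ B_r`: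
an `x ∈ A ∩ B_r` lies in `x (A ∪ B)_r ⊆ (xA ∪ xB)_r ⊆ (AB)_r`. Induction on the number of
factors, with `A = I_a` and `B = ∏_{i ≠ a} I_i`, gives the theorem.
-/

namespace IdealSystem

variable (rs : IdealSystem R)

lemma cl_subset_cl {X Y : Set R} (h : X ⊆ Y) : rs.cl X ⊆ rs.cl Y :=
  rs.cl_mono X Y (h.trans (rs.subset_cl Y))

lemma cl_cl (X : Set R) : rs.cl (rs.cl X) = rs.cl X :=
  (rs.cl_mono _ _ subset_rfl).antisymm (rs.subset_cl _)

lemma cl_one : rs.cl 1 = Set.univ :=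
  Set.eq_univ_of_forall fun x =>
    Set.singleton_one (α := R) ▸ rs.principal_subset 1 ⟨x, (one_mul x).symm⟩

lemma cl_inter_of_cl_eq {A B : Set R} (hA : rs.cl A = A) (hB : rs.cl B = B) :
    rs.cl (A ∩ B) = A ∩ B := by
  refine (Set.subset_inter ?_ ?_).antisymm (rs.subset_cl _)
  · exact (rs.cl_subset_cl Set.inter_subset_left).trans hA.subset
  · exact (rs.cl_subset_cl Set.inter_subset_right).trans hB.subset

lemma mul_mem_of_cl_eq {A : Set R} (hA : rs.cl A = A) (r : R) {a : R} (ha : a ∈ A) :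
    r * a ∈ A :=
  hA ▸ rs.mul_mem A r a (rs.subset_cl A ha)

lemma smul_cl_subset {c : R} {X Y : Set R} (h : c • X ⊆ rs.cl Y) : c • rs.cl X ⊆ rs.cl Y := by
  rw [rs.smul_cl]
  exact rs.cl_mono _ _ h

lemma cl_mul_subset (X Y : Set R) : rs.cl X * Y ⊆ rs.cl (X * Y) := by
  refine Set.mul_subset_iff.2 fun x hx y hy => ?_
  have hy : y • rs.cl X ⊆ rs.cl (X * Y) := by
    rw [mul_comm X Y]
    exact rs.smul_cl_subset ((Set.smul_set_subset_mul hy).trans (rs.subset_cl _))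
  simpa only [smul_eq_mul, mul_comm y x] using hy (Set.smul_mem_smul_set hx)

lemma mul_cl_subset (X Y : Set R) : X * rs.cl Y ⊆ rs.cl (X * Y) := by
  simpa only [mul_comm] using rs.cl_mul_subset Y X

lemma cl_mul_cl_subset (X Y : Set R) : rs.cl X * rs.cl Y ⊆ rs.cl (X * Y) :=
  (rs.cl_mul_subset X _).trans (rs.cl_mono _ _ (rs.mul_cl_subset X Y))

lemma one_mem_cl_union_mul {A B C : Set R} (hA : rs.cl A = A)
    (hB : (1 : R) ∈ rs.cl (A ∪ B)) (hC : (1 : R) ∈ rs.cl (A ∪ C)) :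
    (1 : R) ∈ rs.cl (A ∪ B * C) := by
  have hprod : (A ∪ B) * (A ∪ C) ⊆ A ∪ B * C := by
    refine Set.mul_subset_iff.2 fun x hx y hy => ?_
    rcases hx with hx | hx
    · exact Or.inl (mul_comm y x ▸ rs.mul_mem_of_cl_eq hA y hx)
    rcases hy with hy | hy
    · exact Or.inl (rs.mul_mem_of_cl_eq hA x hy)
    · exact Or.inr (Set.mul_mem_mul hx hy)
  have h1 := rs.cl_mul_cl_subset _ _ (Set.mul_mem_mul hB hC)
  rw [one_mul] at h1
  exact rs.cl_subset_cl hprod h1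

lemma one_mem_cl_union_prod {ι : Type*} {A : Set R} (hA : rs.cl A = A) (B : ι → Set R)
    (s : Finset ι) (h : ∀ i ∈ s, (1 : R) ∈ rs.cl (A ∪ B i)) :
    (1 : R) ∈ rs.cl (A ∪ ∏ i ∈ s, B i) := by
  classical
  induction s using Finset.induction with
  | empty => exact rs.subset_cl _ (Or.inr Set.one_mem_one)
  | insert a s ha ih =>
    rw [Finset.prod_insert ha]
    exact rs.one_mem_cl_union_mul hA (h a (s.mem_insert_self a))
      (ih fun i hi => h i (Finset.mem_insert_of_mem hi))

lemma cl_mul_eq_inter_cl {A B : Set R} (hA : rs.cl A = A) (h1 : (1 : R) ∈ rs.cl (A ∪ B)) :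
    rs.cl (A * B) = A ∩ rs.cl B := by
  apply Set.Subset.antisymm
  · rw [← rs.cl_inter_of_cl_eq hA (rs.cl_cl B)]
    refine rs.cl_subset_cl (Set.mul_subset_iff.2 fun a ha b hb => ⟨?_, ?_⟩)
    · exact mul_comm b a ▸ rs.mul_mem_of_cl_eq hA b ha
    · exact rs.mul_mem _ a b (rs.subset_cl B hb)
  · rintro x ⟨hxA, hxB⟩
    have hx : x • (A ∪ B) ⊆ rs.cl (A * B) := by
      rintro _ ⟨y, hy | hy, rfl⟩
      · show x * y ∈ _
        rw [mul_comm A B]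
        exact rs.cl_mul_subset B A (Set.mul_mem_mul hxB hy)
      · exact rs.subset_cl _ (Set.mul_mem_mul hxA hy)
    simpa only [smul_eq_mul, mul_one] using rs.smul_cl_subset hx (Set.smul_mem_smul_set h1)

lemma RCoprime.one_mem_cl_union {I J : Set R} (h : rs.RCoprime I J) :
    (1 : R) ∈ rs.cl (I ∪ J) := by
  rw [h _ (rs.cl_cl _) (Set.subset_union_left.trans (rs.subset_cl _))
    (Set.subset_union_right.trans (rs.subset_cl _))]
  trivial

lemma cl_prod_eq_biInter {ι : Type*} (I : ι → Set R) {s : Finset ι}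
    (hI : ∀ i ∈ s, rs.cl (I i) = I i)
    (hcop : (s : Set ι).Pairwise fun i j => rs.RCoprime (I i) (I j)) :
    rs.cl (∏ i ∈ s, I i) = ⋂ i ∈ s, I i := by
  classical
  induction s using Finset.induction with
  | empty => simpa using rs.cl_one
  | insert a s ha ih =>
    rw [Finset.coe_insert, Set.pairwise_insert] at hcop
    have hIa := hI a (s.mem_insert_self a)
    have h1 : (1 : R) ∈ rs.cl (I a ∪ ∏ i ∈ s, I i) :=
      rs.one_mem_cl_union_prod hIa I s fun i hi =>
        (hcop.2 i hi (ne_of_mem_of_not_mem hi ha).symm).1.one_mem_cl_union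
    rw [Finset.prod_insert ha, Finset.set_biInter_insert, rs.cl_mul_eq_inter_cl hIa h1,
      ih (fun i hi => hI i (Finset.mem_insert_of_mem hi)) hcop.1]

end IdealSystem

theorem cl_prod_eq_iInter_of_pairwise_rCoprime_general (rs : IdealSystem R)
    (n : ℕ) (I : Fin n → Set R) (hI : ∀ i, rs.IsRIdeal (I i))
    (hcop : ∀ i j, i ≠ j → rs.RCoprime (I i) (I j)) :
    rs.cl (∏ i, I i) = ⋂ i, I i := by
  simpa using rs.cl_prod_eq_biInter I (s := Finset.univ) (fun i _ => (hI i).1)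
    fun i _ j _ => hcop i j

/-- Let `r` be a finitary ideal system on the domain `R` and `I₁, …, I_n` pairwise
`r`-coprime nonzero `r`-ideals. Then `(I₁ ⋯ I_n)_r = I₁ ∩ ⋯ ∩ I_n`. -/
theorem cl_prod_eq_iInter_of_pairwise_rCoprime (rs : IdealSystem R)
    (hfin : ∀ (X : Set R), ∀ x ∈ rs.cl X, ∃ E : Finset R, ↑E ⊆ X ∧ x ∈ rs.cl ↑E)
    (n : ℕ) (I : Fin n → Set R) (hI : ∀ i, rs.IsRIdeal (I i))
    (hcop : ∀ i j, i ≠ j → rs.RCoprime (I i) (I j)) :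
    rs.cl (∏ i, I i) = ⋂ i, I i :=
  cl_prod_eq_iInter_of_pairwise_rCoprime_general rs n I hI hcop
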